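/- arXiv:1607.08357 — 7 statements merged into one kernel-verified Lean document; each statement's English description precedes it below -/
import Mathlib

section
/- Let H be a finite connected undirected graph. For every n ≥ 1, the graph whose vertices are walks of length n in H (sequences p_0,...,p_n with p_i adjacent to p_{i+1}), where two walks p and q are adjacent if p_i is adjacent to q_i in H for all i, is connected. -/
set_option maxHeartbeats 1000000


/-- The vertices of the graph of walks of length `n` in the graph with
adjacency relation `A`: sequences `p₀,…,pₙ` with consecutive vertices adjacent. -/
def WalkVert {V : Type} (A : V → V → Prop) (n : ℕ) : Type :=
  {f : Fin (n + 1) → V // ∀ i : Fin n, A (f i.castSucc) (f i.succ)}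

/-- Two walks of length `n` are adjacent if they are coordinatewise adjacent. -/
def WalkAdj {V : Type} (A : V → V → Prop) (n : ℕ) (x y : WalkVert A n) : Prop :=
  ∀ i : Fin (n + 1), A (x.1 i) (y.1 i)

lemma fin_mk_eq {m : ℕ} (a b : ℕ) (ha : a < m) (hb : b < m) (h : a = b) :
    (⟨a, ha⟩ : Fin m) = ⟨b, hb⟩ := by subst h; rfl

lemma walk_step {V : Type} {A : V → V → Prop} {n : ℕ} (r : WalkVert A n)
    (k : ℕ) (hk : k < n) :
    A (r.1 ⟨k, by omega⟩) (r.1 ⟨k + 1, by omega⟩) := r.2 ⟨k, hk⟩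

/-- Sliding a window of length `n+1` along a (long) walk `F` gives a chain of
adjacent walks. -/
lemma windows {V : Type} {A : V → V → Prop} {n : ℕ} (F : ℕ → V) :
    ∀ (m : ℕ), (∀ j, j < m + n → A (F j) (F (j+1))) →
    ∀ x y : WalkVert A n, (∀ i : Fin (n+1), x.1 i = F i) →
    (∀ i : Fin (n+1), y.1 i = F (m + i)) →
    Relation.ReflTransGen (WalkAdj A n) x y := by
  intro m
  induction m with
  | zero =>
    intro _ x y hx hy
    have hxy : x = y := Subtype.ext (funext fun i => by rw [hx i, hy i, Nat.zero_add])
    exact hxy ▸ Relation.ReflTransGen.refl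
  | succ m ih =>
    intro hF x y hx hy
    have hz : ∀ i : Fin n, A ((fun j : Fin (n+1) => F (m + (j:ℕ))) i.castSucc)
        ((fun j : Fin (n+1) => F (m + (j:ℕ))) i.succ) := by
      intro i
      have h1 : (m + ((i.succ : Fin (n+1)) : ℕ)) = (m + ((i.castSucc : Fin (n+1)) : ℕ)) + 1 := by
        simp only [Fin.val_succ, Fin.coe_castSucc]; omega
      simp only [h1]
      exact hF _ (by have := i.isLt; simp only [Fin.coe_castSucc]; omega)
    set z : WalkVert A n := ⟨fun j : Fin (n+1) => F (m + (j:ℕ)), hz⟩ with hzdef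
    have h1 : Relation.ReflTransGen (WalkAdj A n) x z :=
      ih (fun j hj => hF j (by omega)) x z hx (fun i => rfl)
    have h2 : WalkAdj A n z y := by
      intro i
      rw [hy i]
      have h3 : (m + 1 + (i:ℕ)) = (m + (i:ℕ)) + 1 := by omega
      rw [h3]
      exact hF _ (by have := i.isLt; omega)
    exact h1.tail h2

/-- For a finite connected undirected graph `H`, the graph of walks of length `n ≥ 1`
(with coordinatewise adjacency) is connected. -/
theorem stmt_0 {V : Type} [Fintype V] (A : V → V → Prop)
    (hsym : Symmetric A)
    (hconn : ∀ u v : V, Relation.ReflTransGen A u v)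
    (n : ℕ) (hn : 1 ≤ n) :
    ∀ p q : WalkVert A n, Relation.ReflTransGen (WalkAdj A n) p q := by
  intro p q
  have key : ∀ b, Relation.ReflTransGen A (p.1 (Fin.last n)) b →
      ∀ r : WalkVert A n, r.1 0 = b → Relation.ReflTransGen (WalkAdj A n) p r := by
    intro b hb
    induction hb with
    | refl =>
      intro r hr0
      -- concatenate p and r, sharing the common vertex p_n = r_0
      set F : ℕ → V := fun j =>
        if h : j < n + 1 then p.1 ⟨j, h⟩ else r.1 ⟨min (j - n) n, by omega⟩ with hFdef
      have Fp : ∀ j (h : j < n + 1), F j = p.1 ⟨j, h⟩ := fun j h => dif_pos h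
      have Fr : ∀ j (h : ¬ (j < n + 1)), F j = r.1 ⟨min (j - n) n, by omega⟩ :=
        fun j h => dif_neg h
      have hlast : Fin.last n = (⟨n, by omega⟩ : Fin (n+1)) := rfl
      apply windows F n
      · intro j hj
        rcases lt_trichotomy (j + 1) (n + 1) with h | h | h
        · rw [Fp j (by omega), Fp (j+1) h]
          exact walk_step p j (by omega)
        · -- j = n
          have hjn : j = n := by omega
          have hn1 : 1 ≤ n := by omega
          rw [Fp j (by omega), Fr (j+1) (by omega)]
          have e1 : (⟨j, by omega⟩ : Fin (n+1)) = ⟨0 + 1, by omega⟩ ∨ True := Or.inr trivial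
          have e2 : (⟨min (j + 1 - n) n, by omega⟩ : Fin (n+1)) = ⟨0 + 1, by omega⟩ :=
            fin_mk_eq _ _ _ _ (by omega)
          rw [e2]
          have e3 : p.1 ⟨j, by omega⟩ = r.1 ⟨0, by omega⟩ := by
            have e0 : (⟨0, by omega⟩ : Fin (n+1)) = 0 := Fin.ext (by simp)
            rw [e0, hr0, hlast]
            exact congrArg _ (fin_mk_eq _ _ _ _ (by omega))
          rw [e3]
          exact walk_step r 0 (by omega)
        · -- j ≥ n + 1
          rw [Fr j (by omega), Fr (j+1) (by omega)]
          have e1 : (⟨min (j - n) n, by omega⟩ : Fin (n+1)) = ⟨j - n, by omega⟩ :=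
            fin_mk_eq _ _ _ _ (by omega)
          have e2 : (⟨min (j + 1 - n) n, by omega⟩ : Fin (n+1)) = ⟨(j - n) + 1, by omega⟩ :=
            fin_mk_eq _ _ _ _ (by omega)
          rw [e1, e2]
          exact walk_step r (j - n) (by omega)
      · intro i
        rw [Fp (i : ℕ) i.isLt]
      · intro i
        rcases Nat.eq_zero_or_pos (i : ℕ) with h0 | h0
        · have hni : (n + (i:ℕ)) = n := by omega
          rw [hni, Fp n (by omega)]
          have e : (⟨n, by omega⟩ : Fin (n+1)) = Fin.last n := rfl
          rw [e, ← hr0]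
          exact congrArg _ (Fin.ext (by simp [h0]))
        · rw [Fr (n + (i:ℕ)) (by omega)]
          exact congrArg _ (fin_mk_eq _ _ _ _ (by have := i.isLt; omega)).symm
    | @tail b' c hab hbc ih =>
      intro r hr0
      -- build r' = (b', r_0, ..., r_{n-1})
      have hr' : ∀ i : Fin n, A ((fun j : Fin (n+1) =>
          if _ : (j : ℕ) = 0 then b' else r.1 ⟨(j:ℕ) - 1, by omega⟩) i.castSucc)
          ((fun j : Fin (n+1) =>
          if _ : (j : ℕ) = 0 then b' else r.1 ⟨(j:ℕ) - 1, by omega⟩) i.succ) := by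
        intro i
        have hsucc : ((i.succ : Fin (n+1)) : ℕ) = (i : ℕ) + 1 := rfl
        have hcs : ((i.castSucc : Fin (n+1)) : ℕ) = (i : ℕ) := rfl
        simp only [hsucc, hcs]
        rcases Nat.eq_zero_or_pos (i : ℕ) with h0 | h0
        · rw [dif_pos h0, dif_neg (by omega)]
          have e : r.1 ⟨(i:ℕ) + 1 - 1, by omega⟩ = c := by
            rw [← hr0]
            exact congrArg _ (Fin.ext (by simp; omega))
          rw [e]
          exact hbc
        · rw [dif_neg (by omega), dif_neg (by omega)]
          have e : (⟨(i:ℕ) + 1 - 1, by omega⟩ : Fin (n+1)) = ⟨((i:ℕ) - 1) + 1, by omega⟩ :=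
            fin_mk_eq _ _ _ _ (by omega)
          rw [e]
          exact walk_step r ((i:ℕ) - 1) (by have := i.isLt; omega)
      set r' : WalkVert A n := ⟨fun j : Fin (n+1) =>
          if _ : (j : ℕ) = 0 then b' else r.1 ⟨(j:ℕ) - 1, by omega⟩, hr'⟩ with hr'def
      have h00 : ((0 : Fin (n+1)) : ℕ) = 0 := Fin.val_zero _
      have hr'0 : r'.1 0 = b' := by
        simp only [hr'def]
        exact dif_pos h00
      have h1 : Relation.ReflTransGen (WalkAdj A n) p r' := ih r' hr'0
      have h2 : WalkAdj A n r' r := by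
        intro i
        rcases Nat.eq_zero_or_pos (i : ℕ) with h0 | h0
        · have e1 : r'.1 i = b' := dif_pos h0
          have e2 : r.1 i = c := by
            rw [← hr0]; exact congrArg _ (Fin.ext (by omega))
          rw [e1, e2]
          exact hbc
        · have e1 : r'.1 i = r.1 ⟨(i:ℕ) - 1, by omega⟩ := dif_neg (by omega)
          have e3 : r.1 (⟨((i:ℕ) - 1) + 1, by have := i.isLt; omega⟩ : Fin (n+1)) = r.1 i :=
            congrArg _ (Fin.ext (show (i:ℕ) - 1 + 1 = (i:ℕ) by omega))
          rw [e1, ← e3]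
          exact walk_step r ((i:ℕ) - 1) (by have := i.isLt; omega)
      exact h1.tail h2
  exact key _ (hconn _ _) q rfl
end

section
/- Let H be a finite connected undirected graph that is not bipartite. Then for every n ≥ 1, the graph of walks of length n in H (with adjacency defined coordinatewise) is connected and not bipartite. -/
/-- A graph (given by its adjacency relation) is bipartite if it admits a proper
two-colouring. -/
def RelBipartite {V : Type} (A : V → V → Prop) : Prop :=
  ∃ c : V → Bool, ∀ u v, A u v → c u ≠ c v

/-- Walks of length `m` from `u` to `v`. -/
inductive WalkN {V : Type} (A : V → V → Prop) : ℕ → V → V → Prop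
  | refl (u : V) : WalkN A 0 u u
  | tail {m : ℕ} {u v w : V} : WalkN A m u v → A v w → WalkN A (m + 1) u w

namespace WalkN

variable {V : Type} {A : V → V → Prop}

lemma head {m : ℕ} {u v w : V} (h : A u v) (hw : WalkN A m v w) :
    WalkN A (m + 1) u w := by
  induction hw with
  | refl x => exact (WalkN.refl u).tail h
  | tail h1 h2 ih => exact (ih h).tail h2

lemma symm (hA : Symmetric A) {m : ℕ} {u v : V} (h : WalkN A m u v) :
    WalkN A m v u := by
  induction h with
  | refl x => exact WalkN.refl x
  | tail h1 h2 ih => exact head (hA h2) ih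

lemma trans {m k : ℕ} {u v w : V} (h1 : WalkN A m u v) (h2 : WalkN A k v w) :
    WalkN A (m + k) u w := by
  induction h2 with
  | refl x => exact h1
  | tail h3 h4 ih => exact (ih h1).tail h4

lemma of_reflTransGen {u v : V} (h : Relation.ReflTransGen A u v) :
    ∃ m, WalkN A m u v := by
  induction h with
  | refl => exact ⟨0, WalkN.refl u⟩
  | tail h1 h2 ih => obtain ⟨m, hm⟩ := ih; exact ⟨m + 1, hm.tail h2⟩

lemma toFun {m : ℕ} {u v : V} (h : WalkN A m u v) :
    ∃ c : ℕ → V, c 0 = u ∧ c m = v ∧ ∀ i < m, A (c i) (c (i + 1)) := by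
  induction h with
  | refl x => exact ⟨fun _ => x, rfl, rfl, by omega⟩
  | @tail m u v w h1 h2 ih =>
    obtain ⟨c, h0, hm, he⟩ := ih
    refine ⟨fun i => if i ≤ m then c i else w, by simpa using h0, by simp, ?_⟩
    intro i hi
    show A (if i ≤ m then c i else w) (if i + 1 ≤ m then c (i + 1) else w)
    rcases Nat.lt_or_ge i m with hlt | hge
    · have e1 : i ≤ m := by omega
      have e2 : i + 1 ≤ m := by omega
      simpa [e1, e2] using he i hlt
    · have e1 : i = m := by omega
      subst e1
      rw [if_pos (le_refl i), if_neg (by omega), hm]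
      exact h2

end WalkN

section Aux

variable {V : Type} {A : V → V → Prop}

lemma nonempty_of_not_bipartite (hnb : ¬ RelBipartite A) : Nonempty V := by
  by_contra h
  have : IsEmpty V := not_nonempty_iff.mp h
  exact hnb ⟨fun v => isEmptyElim v, fun u => isEmptyElim u⟩

lemma exists_neighbor (hconn : ∀ u v : V, Relation.ReflTransGen A u v)
    (hnb : ¬ RelBipartite A) (v : V) : ∃ w, A v w := by
  by_contra h
  push_neg at h
  have hall : ∀ w, Relation.ReflTransGen A v w → w = v := by
    intro w hw
    induction hw with
    | refl => rfl
    | tail h1 h2 ih => rw [ih] at h2; exact absurd h2 (h _)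
  refine hnb ⟨fun _ => true, fun u w hu => ?_⟩
  rw [hall u (hconn v u)] at hu
  exact absurd hu (h w)

open Classical in
lemma exists_odd_closed (hsym : Symmetric A)
    (hconn : ∀ u v : V, Relation.ReflTransGen A u v)
    (hnb : ¬ RelBipartite A) : ∃ (b : V) (L : ℕ), Odd L ∧ WalkN A L b b := by
  have : Nonempty V := nonempty_of_not_bipartite hnb
  obtain ⟨b⟩ := this
  rw [RelBipartite] at hnb
  push_neg at hnb
  obtain ⟨u, v, huv, hc⟩ := hnb (fun v => decide (∃ m, Even m ∧ WalkN A m b v))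
  rw [decide_eq_decide] at hc
  by_cases hu : ∃ m, Even m ∧ WalkN A m b u
  · obtain ⟨m1, he1, hw1⟩ := hu
    obtain ⟨m2, he2, hw2⟩ := hc.mp ⟨m1, he1, hw1⟩
    refine ⟨b, m1 + 1 + m2, ?_, (hw1.tail huv).trans (hw2.symm hsym)⟩
    rcases he1 with ⟨a, ha⟩; rcases he2 with ⟨c, hcc⟩
    exact ⟨a + c, by omega⟩
  · have hv : ¬ ∃ m, Even m ∧ WalkN A m b v := fun h => hu (hc.mpr h)
    obtain ⟨m1, hw1⟩ := WalkN.of_reflTransGen (hconn b u)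
    obtain ⟨m2, hw2⟩ := WalkN.of_reflTransGen (hconn b v)
    have ho1 : Odd m1 := by
      rcases Nat.even_or_odd m1 with h | h
      · exact absurd ⟨m1, h, hw1⟩ hu
      · exact h
    have ho2 : Odd m2 := by
      rcases Nat.even_or_odd m2 with h | h
      · exact absurd ⟨m2, h, hw2⟩ hv
      · exact h
    refine ⟨b, m1 + 1 + m2, ?_, (hw1.tail huv).trans (hw2.symm hsym)⟩
    rcases ho1 with ⟨a, ha⟩; rcases ho2 with ⟨c, hcc⟩
    exact ⟨a + c + 1, by omega⟩

lemma concatFun {f g : ℕ → V} {a b : ℕ}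
    (hf : ∀ i < a, A (f i) (f (i + 1))) (hg : ∀ i < b, A (g i) (g (i + 1)))
    (hfg : f a = g 0) :
    ∃ h : ℕ → V, (∀ i < a + b, A (h i) (h (i + 1))) ∧
      (∀ i ≤ a, h i = f i) ∧ (∀ i, h (a + i) = g (i)) := by
  refine ⟨fun i => if i ≤ a then f i else g (i - a), ?_, ?_, ?_⟩
  · intro i hi
    show A (if i ≤ a then f i else g (i - a)) (if i + 1 ≤ a then f (i + 1) else g (i + 1 - a))
    rcases Nat.lt_or_ge i a with hlt | hge
    · have e1 : i ≤ a := by omega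
      have e2 : i + 1 ≤ a := by omega
      simpa [e1, e2] using hf i hlt
    · rcases Nat.eq_or_lt_of_le hge with heq | hlt'
      · rw [if_pos (by omega : i ≤ a), if_neg (by omega),
          (show f i = g 0 by rw [← heq]; exact hfg),
          (show i + 1 - a = 1 by omega)]
        exact hg 0 (by omega)
      · rw [if_neg (by omega), if_neg (by omega)]
        have e3 : i + 1 - a = (i - a) + 1 := by omega
        rw [e3]
        exact hg _ (by omega)
  · intro i hi
    show (if i ≤ a then f i else g (i - a)) = f i
    simp [hi]
  · intro i
    show (if a + i ≤ a then f (a + i) else g (a + i - a)) = g i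
    rcases Nat.eq_zero_or_pos i with h | h
    · simp [h, hfg.symm]
    · have e1 : ¬ (a + i ≤ a) := by omega
      have e2 : a + i - a = i := by omega
      simp [e1, e2]

lemma extendFun (nb : V → V) (hnb : ∀ v, A v (nb v)) (f : ℕ → V) (k : ℕ)
    (hf : ∀ i < k, A (f i) (f (i + 1))) :
    ∃ F : ℕ → V, (∀ i, A (F i) (F (i + 1))) ∧ ∀ i ≤ k, F i = f i := by
  refine ⟨fun i => if i ≤ k then f i else nb^[i - k] (f k), ?_, ?_⟩
  · intro i
    show A (if i ≤ k then f i else nb^[i - k] (f k))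
      (if i + 1 ≤ k then f (i + 1) else nb^[i + 1 - k] (f k))
    rcases Nat.lt_or_ge i k with hlt | hge
    · have e1 : i ≤ k := by omega
      have e2 : i + 1 ≤ k := by omega
      simpa [e1, e2] using hf i hlt
    · have key : ∀ j, j ≥ k → (if j ≤ k then f j else nb^[j - k] (f k)) = nb^[j - k] (f k) := by
        intro j hj
        rcases Nat.eq_or_lt_of_le hj with h | h
        · simp [← h]
        · have : ¬ (j ≤ k) := by omega
          simp [this]
      rw [key i hge, key (i + 1) (by omega)]
      have e3 : i + 1 - k = (i - k) + 1 := by omega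
      rw [e3, Function.iterate_succ_apply']
      exact hnb _
  · intro i hi
    show (if i ≤ k then f i else nb^[i - k] (f k)) = f i
    simp [hi]

end Aux

/-- Window of length `n` of an infinite walk, starting at `j`. -/
def win {V : Type} (A : V → V → Prop) (n : ℕ) (F : ℕ → V)
    (hF : ∀ i, A (F i) (F (i + 1))) (j : ℕ) : WalkVert A n :=
  ⟨fun i => F (j + i.val), fun i => by
    show A (F (j + (i.castSucc).val)) (F (j + (i.succ).val))
    rw [Fin.coe_castSucc, Fin.val_succ, ← Nat.add_assoc]
    exact hF _⟩

lemma win_adj {V : Type} (A : V → V → Prop) (n : ℕ) (F : ℕ → V)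
    (hF : ∀ i, A (F i) (F (i + 1))) (j : ℕ) :
    WalkAdj A n (win A n F hF j) (win A n F hF (j + 1)) := by
  intro i
  show A (F (j + i.val)) (F (j + 1 + i.val))
  have e : j + 1 + i.val = (j + i.val) + 1 := by omega
  rw [e]
  exact hF _

lemma win_reach {V : Type} (A : V → V → Prop) (n : ℕ) (F : ℕ → V)
    (hF : ∀ i, A (F i) (F (i + 1))) (j : ℕ) :
    Relation.ReflTransGen (WalkAdj A n) (win A n F hF 0) (win A n F hF j) := by
  induction j with
  | zero => exact Relation.ReflTransGen.refl
  | succ j ih => exact ih.tail (win_adj A n F hF j)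

lemma bool_parity {x y z : Bool} (h : x ≠ y) : (x = z) ↔ ¬ (y = z) := by
  revert h; revert x y z; decide

/-- For a finite connected non-bipartite undirected graph `H`, the graph of walks of
length `n ≥ 1` (with coordinatewise adjacency) is connected and not bipartite. -/
theorem stmt_1 {V : Type} [Fintype V] (A : V → V → Prop)
    (hsym : Symmetric A)
    (hconn : ∀ u v : V, Relation.ReflTransGen A u v)
    (hnb : ¬ RelBipartite A)
    (n : ℕ) (hn : 1 ≤ n) :
    (∀ p q : WalkVert A n, Relation.ReflTransGen (WalkAdj A n) p q) ∧
      ¬ RelBipartite (WalkAdj A n) := by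
  have hNB := exists_neighbor hconn hnb
  choose nb hnbb using hNB
  constructor
  · -- connectivity
    intro p q
    set pf : ℕ → V := fun i => p.1 ⟨min i n, by omega⟩ with hpf
    set qf : ℕ → V := fun i => q.1 ⟨min i n, by omega⟩ with hqf
    have hpe : ∀ i < n, A (pf i) (pf (i + 1)) := by
      intro i hi
      have h2 := p.2 ⟨i, hi⟩
      show A (p.1 ⟨min i n, by omega⟩) (p.1 ⟨min (i + 1) n, by omega⟩)
      have e1 : (⟨min i n, by omega⟩ : Fin (n + 1)) = (⟨i, hi⟩ : Fin n).castSucc :=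
        Fin.ext (by show min i n = i; omega)
      have e2 : (⟨min (i + 1) n, by omega⟩ : Fin (n + 1)) = (⟨i, hi⟩ : Fin n).succ :=
        Fin.ext (by show min (i + 1) n = i + 1; omega)
      rw [e1, e2]; exact h2
    have hqe : ∀ i < n, A (qf i) (qf (i + 1)) := by
      intro i hi
      have h2 := q.2 ⟨i, hi⟩
      show A (q.1 ⟨min i n, by omega⟩) (q.1 ⟨min (i + 1) n, by omega⟩)
      have e1 : (⟨min i n, by omega⟩ : Fin (n + 1)) = (⟨i, hi⟩ : Fin n).castSucc :=
        Fin.ext (by show min i n = i; omega)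
      have e2 : (⟨min (i + 1) n, by omega⟩ : Fin (n + 1)) = (⟨i, hi⟩ : Fin n).succ :=
        Fin.ext (by show min (i + 1) n = i + 1; omega)
      rw [e1, e2]; exact h2
    obtain ⟨m, hm⟩ := WalkN.of_reflTransGen (hconn (p.1 (Fin.last n)) (q.1 0))
    obtain ⟨c, hc0, hcm, hce⟩ := hm.toFun
    have hpc : pf n = c 0 := by
      rw [hc0]
      show p.1 ⟨min n n, by omega⟩ = p.1 (Fin.last n)
      exact congrArg p.1 (Fin.ext (show min n n = n by omega))
    obtain ⟨h1, h1e, h1f, h1g⟩ := concatFun hpe hce hpc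
    have h1c : h1 (n + m) = qf 0 := by
      rw [h1g m, hcm]
      show q.1 0 = q.1 ⟨min 0 n, by omega⟩
      exact congrArg q.1 (Fin.ext (by simp))
    obtain ⟨h2, h2e, h2f, h2g⟩ := concatFun h1e hqe h1c
    obtain ⟨F, hFe, hFf⟩ := extendFun nb hnbb h2 (n + m + n) h2e
    have hp : win A n F hFe 0 = p := by
      apply Subtype.ext; funext i
      show F (0 + i.val) = p.1 i
      have hin : i.val ≤ n := by omega
      rw [hFf (0 + i.val) (by omega), h2f (0 + i.val) (by omega),
        h1f (0 + i.val) (by omega)]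
      show p.1 ⟨min (0 + i.val) n, by omega⟩ = p.1 i
      exact congrArg p.1 (Fin.ext (show min (0 + i.val) n = i.val by omega))
    have hq : win A n F hFe (n + m) = q := by
      apply Subtype.ext; funext i
      show F (n + m + i.val) = q.1 i
      have hin : i.val ≤ n := by omega
      rw [hFf (n + m + i.val) (by omega), h2g i.val]
      show q.1 ⟨min i.val n, by omega⟩ = q.1 i
      exact congrArg q.1 (Fin.ext (show min i.val n = i.val by omega))
    rw [← hp, ← hq]
    exact win_reach A n F hFe (n + m)
  · -- not bipartite
    rintro ⟨col, hcol⟩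
    obtain ⟨b, L, hLodd, hLwalk⟩ := exists_odd_closed hsym hconn hnb
    have hL1 : 1 ≤ L := hLodd.pos
    obtain ⟨cyc, hcyc0, hcycL, hcyce⟩ := hLwalk.toFun
    set F : ℕ → V := fun i => cyc (i % L) with hF
    have hFe : ∀ i, A (F i) (F (i + 1)) := by
      intro i
      show A (cyc (i % L)) (cyc ((i + 1) % L))
      have hr : i % L < L := Nat.mod_lt _ (by omega)
      have e0 : (i % L + 1) + L * (i / L) = i + 1 := by
        rw [Nat.add_right_comm, Nat.mod_add_div]
      have e1 : (i + 1) % L = (i % L + 1) % L := by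
        rw [← e0, Nat.add_mul_mod_self_left]
      by_cases h : i % L + 1 = L
      · have e : (i + 1) % L = 0 := by rw [e1, h, Nat.mod_self]
        have hbl : cyc 0 = cyc L := by rw [hcyc0, hcycL]
        rw [e, hbl]
        have h2 := hcyce (i % L) hr
        rw [h] at h2
        exact h2
      · have e : (i + 1) % L = i % L + 1 := by
          rw [e1]; exact Nat.mod_eq_of_lt (by omega)
        rw [e]
        exact hcyce _ hr
    have hper : win A n F hFe L = win A n F hFe 0 := by
      apply Subtype.ext; funext i
      show cyc ((L + i.val) % L) = cyc ((0 + i.val) % L)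
      congr 1
      simp [Nat.add_mod_left]
    have key : ∀ j, (col (win A n F hFe j) = col (win A n F hFe 0)) ↔ j % 2 = 0 := by
      intro j
      induction j with
      | zero => simp
      | succ j ih =>
        have hne : col (win A n F hFe (j + 1)) ≠ col (win A n F hFe j) :=
          fun h => hcol _ _ (win_adj A n F hFe j) h.symm
        rw [bool_parity hne, ih]
        omega
    have := (key L).mp (by rw [hper])
    rw [Nat.odd_iff] at hLodd
    omega
end

section
/- For n ≥ 4 and d ≥ 1, the graph whose vertices are proper n-colorings of Z^{d} (graph homomorphisms from Z^{d} to the complete graph K_n), where two colorings x, y are adjacent if x_i ≠ y_i for all i ∈ Z^{d}, has diameter at most 4. -/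
/-- Nearest-neighbour adjacency on `ℤ^d`. -/
def GridAdj (d : ℕ) (i j : Fin d → ℤ) : Prop :=
  (∑ k, (i k - j k).natAbs) = 1

/-- `x` is a proper `n`-colouring of the grid `ℤ^d`, i.e. a graph homomorphism to `K_n`. -/
def IsProperColoring (n d : ℕ) (x : (Fin d → ℤ) → Fin n) : Prop :=
  ∀ i j, GridAdj d i j → x i ≠ x j

/-- For `n ≥ 4`, `d ≥ 1`, the graph of proper `n`-colourings of `ℤ^d`, where two colourings
are adjacent iff they differ everywhere, has diameter at most `4`. -/
theorem stmt_5 (n d : ℕ) (hn : 4 ≤ n) (hd : 1 ≤ d)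
    (x y : (Fin d → ℤ) → Fin n)
    (hx : IsProperColoring n d x) (hy : IsProperColoring n d y) :
    ∃ m ≤ 4, ∃ c : ℕ → (Fin d → ℤ) → Fin n,
      c 0 = x ∧ c m = y ∧
      (∀ t ≤ m, IsProperColoring n d (c t)) ∧
      (∀ t < m, ∀ i, c t i ≠ c (t + 1) i) := by
  -- parity of a grid vertex
  set p : (Fin d → ℤ) → ZMod 2 := fun i => ∑ k, ((i k : ZMod 2)) with hp
  have hneg : ∀ a : ZMod 2, -a = a := by decide
  have hterm : ∀ a : ℤ, ((a.natAbs : ZMod 2)) = (a : ZMod 2) := by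
    intro a
    rcases Int.natAbs_eq a with h' | h'
    · conv_rhs => rw [h']
      rw [Int.cast_natCast]
    · conv_rhs => rw [h']
      rw [Int.cast_neg, Int.cast_natCast, hneg]
  have hadj : ∀ i j, GridAdj d i j → p i ≠ p j := by
    intro i j h hceq
    have h2 : ((∑ k, (i k - j k).natAbs : ℕ) : ZMod 2) = 1 := by
      rw [h]; norm_num
    rw [Nat.cast_sum] at h2
    simp only [hterm] at h2
    have h3 : (∑ k, ((i k - j k : ℤ) : ZMod 2)) = p i - p j := by
      rw [hp]
      push_cast
      rw [← Finset.sum_sub_distrib]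
    rw [h3, hceq, sub_self] at h2
    exact absurd h2 (by decide)
  have hcases : ∀ a : ZMod 2, a = 0 ∨ a = 1 := by decide
  -- the four colours
  have h0 : 0 < n := by omega
  have h1 : 1 < n := by omega
  have h2 : 2 < n := by omega
  have h3 : 3 < n := by omega
  set c0 : Fin n := ⟨0, h0⟩ with hc0
  set c1 : Fin n := ⟨1, h1⟩ with hc1
  set c2 : Fin n := ⟨2, h2⟩ with hc2
  set c3 : Fin n := ⟨3, h3⟩ with hc3
  set f : ((Fin d → ℤ) → Fin n) → (Fin d → ℤ) → Fin n :=
    fun z i => if (z i : ℕ) ≤ 1 then (if p i = 0 then c2 else c3)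
               else (if p i = 0 then c0 else c1) with hf
  set mid : (Fin d → ℤ) → Fin n := fun i => if p i = 0 then c1 else c0 with hmid
  have hfproper : ∀ z, IsProperColoring n d (f z) := by
    intro z i j hij hEq
    have hpij := hadj i j hij
    have hval := congrArg Fin.val hEq
    simp only [hf] at hval
    rcases hcases (p i) with hpi | hpi <;> rcases hcases (p j) with hpj | hpj
    · exact hpij (hpi.trans hpj.symm)
    · simp only [hpi, hpj, if_true, one_ne_zero, if_false, if_pos, if_neg] at hval
      split_ifs at hval <;> simp [hc0, hc1, hc2, hc3] at hval
    · simp only [hpi, hpj, if_true, one_ne_zero, if_false, if_pos, if_neg] at hval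
      split_ifs at hval <;> simp [hc0, hc1, hc2, hc3] at hval
    · exact hpij (hpi.trans hpj.symm)
  have hmidproper : IsProperColoring n d mid := by
    intro i j hij hEq
    have hpij := hadj i j hij
    have hval := congrArg Fin.val hEq
    simp only [hmid] at hval
    rcases hcases (p i) with hpi | hpi <;> rcases hcases (p j) with hpj | hpj <;>
        simp only [hpi, hpj, if_true, one_ne_zero, if_false] at hval <;>
      first
        | exact hpij (hpi.trans hpj.symm)
        | simp [hc0, hc1] at hval
  have hfne : ∀ z i, f z i ≠ z i := by
    intro z i hEq
    have hval := congrArg Fin.val hEq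
    simp only [hf] at hval
    by_cases ha : ((z i : ℕ)) ≤ 1 <;>
        simp only [ha, if_true, if_false] at hval <;>
      split_ifs at hval <;> simp [hc0, hc1, hc2, hc3] at hval <;> omega
  have hmidne : ∀ z i, f z i ≠ mid i := by
    intro z i hEq
    have hval := congrArg Fin.val hEq
    simp only [hf, hmid] at hval
    by_cases ha : ((z i : ℕ)) ≤ 1 <;>
        simp only [ha, if_true, if_false] at hval <;>
      split_ifs at hval <;> simp [hc0, hc1, hc2, hc3] at hval
  refine ⟨4, le_refl 4,
    fun t => if t = 0 then x else if t = 1 then f x else if t = 2 then mid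
             else if t = 3 then f y else y, by simp, by simp, ?_, ?_⟩
  · intro t ht
    interval_cases t <;> simp [hx, hy, hfproper, hmidproper]
  · intro t ht i
    interval_cases t <;> simp only []
    · simpa using fun h => hfne x i h.symm
    · simpa using hmidne x i
    · simpa using fun h => hmidne y i h.symm
    · simpa using hfne y i
end

section
/- Let H_1 and H_2 be finite connected undirected graphs, neither of which is bipartite. Then the tensor (categorical) product H_1 × H_2 is connected and not bipartite. -/
/-- The tensor (categorical) product of two simple graphs. -/
def tensorProd {V1 V2 : Type} (H1 : SimpleGraph V1) (H2 : SimpleGraph V2) :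
    SimpleGraph (V1 × V2) where
  Adj a b := H1.Adj a.1 b.1 ∧ H2.Adj a.2 b.2
  symm := ⟨fun _ _ h => ⟨h.1.symm, h.2.symm⟩⟩
  loopless := ⟨fun a h => H1.irrefl h.1⟩

/-- A simple graph is bipartite if it admits a proper two-colouring. -/
def IsBip {V : Type} (G : SimpleGraph V) : Prop :=
  ∃ c : V → Bool, ∀ u v, G.Adj u v → c u ≠ c v

open SimpleGraph

/-- Iterate a closed walk `n` times. -/
def iterWalk {V : Type} {G : SimpleGraph V} {v : V} (w : G.Walk v v) : ℕ → G.Walk v v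
  | 0 => Walk.nil
  | n + 1 => w.append (iterWalk w n)

lemma iterWalk_length {V : Type} {G : SimpleGraph V} {v : V} (w : G.Walk v v) (n : ℕ) :
    (iterWalk w n).length = n * w.length := by
  induction n with
  | zero => simp [iterWalk]
  | succ n ih => simp [iterWalk, Walk.length_append, ih]; ring

/-- zip two equal-length walks into a walk in the tensor product. -/
lemma zip_walk {V1 V2 : Type} {H1 : SimpleGraph V1} {H2 : SimpleGraph V2} :
    ∀ {a b : V1} (w1 : H1.Walk a b) {c d : V2} (w2 : H2.Walk c d),
      w1.length = w2.length →
      ∃ w : (tensorProd H1 H2).Walk (a, c) (b, d), w.length = w1.length := by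
  intro a b w1
  induction w1 with
  | nil =>
    intro c d w2 h
    cases w2 with
    | nil => exact ⟨Walk.nil, rfl⟩
    | cons h2 p2 => simp [Walk.length_cons] at h
  | cons h1 p1 ih =>
    intro c d w2 h
    cases w2 with
    | nil => simp [Walk.length_cons] at h
    | cons h2 p2 =>
      simp only [Walk.length_cons, Nat.add_right_cancel_iff] at h
      obtain ⟨w, hw⟩ := ih p2 h
      exact ⟨Walk.cons (show (tensorProd H1 H2).Adj _ _ from ⟨h1, h2⟩) w, by simp [Walk.length_cons, hw]⟩

/-- In a connected non-bipartite graph there is an odd closed walk at every vertex. -/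
lemma odd_closed_walk {V : Type} {G : SimpleGraph V} (hc : G.Connected) (hb : ¬ IsBip G)
    (x : V) : ∃ w : G.Walk x x, Odd w.length := by
  classical
  have hr : ∀ v : V, G.Reachable x v := fun v => hc.preconnected x v
  let w : ∀ v : V, G.Walk x v := fun v => (hr v).some
  have h3 : ¬ ∀ u v, G.Adj u v → (decide (Odd (w u).length)) ≠ (decide (Odd (w v).length)) :=
    fun h => hb ⟨fun v => decide (Odd (w v).length), h⟩
  push_neg at h3
  obtain ⟨u, v, hadj, heq⟩ := h3
  have hpar : Odd (w u).length ↔ Odd (w v).length := by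
    simpa [decide_eq_decide] using heq
  refine ⟨(w u).append (Walk.cons hadj (w v).reverse), ?_⟩
  simp only [Walk.length_append, Walk.length_cons, Walk.length_reverse]
  rw [Nat.odd_iff, Nat.odd_iff] at hpar
  rw [Nat.odd_iff]
  omega

/-- In a connected non-bipartite graph, every sufficiently large length is achieved
by a walk between any two given vertices. -/
lemma exists_walk_of_length {V : Type} {G : SimpleGraph V} (hc : G.Connected)
    (hb : ¬ IsBip G) (u v : V) :
    ∃ n0 : ℕ, ∀ n ≥ n0, ∃ w : G.Walk u v, w.length = n := by
  classical
  obtain ⟨p⟩ := hc.preconnected u v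
  obtain ⟨o, ho⟩ := odd_closed_walk hc hb v
  have hm1 : 1 ≤ o.length := by
    rcases ho with ⟨k, hk⟩; omega
  -- get a neighbour of v from the first step of o
  obtain ⟨y, hadj, -⟩ : ∃ y, G.Adj v y ∧ True := by
    cases o with
    | nil => simp at hm1
    | cons h _ => exact ⟨_, h, trivial⟩
  let t : G.Walk v v := Walk.cons hadj (Walk.cons hadj.symm Walk.nil)
  have ht : t.length = 2 := rfl
  refine ⟨p.length + o.length, fun n hn => ?_⟩
  rcases Nat.even_or_odd (n - p.length) with he | hodd
  · refine ⟨p.append (iterWalk t ((n - p.length) / 2)), ?_⟩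
    simp only [Walk.length_append, iterWalk_length, ht]
    rw [Nat.even_iff] at he
    omega
  · refine ⟨p.append (o.append (iterWalk t ((n - p.length - o.length) / 2))), ?_⟩
    simp only [Walk.length_append, iterWalk_length, ht]
    rw [Nat.odd_iff] at hodd ho
    omega

/-- A proper 2-colouring forces walk lengths to have the parity of the colour difference. -/
lemma coloring_parity {V : Type} {G : SimpleGraph V} {c : V → Bool}
    (hc : ∀ u v, G.Adj u v → c u ≠ c v) :
    ∀ {u v : V} (w : G.Walk u v), (c u = c v) ↔ Even w.length := by
  intro u v w
  induction w with
  | nil => simp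
  | @cons a m b h p ih =>
    have h1 := hc _ _ h
    simp only [Walk.length_cons, Nat.even_add_one, ← ih]
    cases hu : c a <;> cases hm : c m <;> cases hb : c b <;> simp_all

/-- The tensor product of two finite connected non-bipartite graphs is connected and
not bipartite. -/
theorem stmt_7 {V1 V2 : Type} [Fintype V1] [Fintype V2]
    (H1 : SimpleGraph V1) (H2 : SimpleGraph V2)
    (h1c : H1.Connected) (h2c : H2.Connected)
    (h1b : ¬ IsBip H1) (h2b : ¬ IsBip H2) :
    (tensorProd H1 H2).Connected ∧ ¬ IsBip (tensorProd H1 H2) := by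
  classical
  have hne1 : Nonempty V1 := h1c.nonempty
  have hne2 : Nonempty V2 := h2c.nonempty
  constructor
  · rw [connected_iff]
    refine ⟨?_, Nonempty.intro (hne1.some, hne2.some)⟩
    rintro ⟨u1, u2⟩ ⟨v1, v2⟩
    obtain ⟨n1, hn1⟩ := exists_walk_of_length h1c h1b u1 v1
    obtain ⟨n2, hn2⟩ := exists_walk_of_length h2c h2b u2 v2
    obtain ⟨w1, hw1⟩ := hn1 (max n1 n2) (le_max_left _ _)
    obtain ⟨w2, hw2⟩ := hn2 (max n1 n2) (le_max_right _ _)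
    obtain ⟨w, -⟩ := zip_walk w1 w2 (by rw [hw1, hw2])
    exact ⟨w⟩
  · rintro ⟨c, hc⟩
    set x1 := hne1.some
    set x2 := hne2.some
    obtain ⟨n1, hn1⟩ := exists_walk_of_length h1c h1b x1 x1
    obtain ⟨n2, hn2⟩ := exists_walk_of_length h2c h2b x2 x2
    set N := 2 * (n1 + n2) + 1 with hN
    obtain ⟨w1, hw1⟩ := hn1 N (by omega)
    obtain ⟨w2, hw2⟩ := hn2 N (by omega)
    obtain ⟨w, hw⟩ := zip_walk w1 w2 (by rw [hw1, hw2])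
    have := (coloring_parity hc w).mp rfl
    rw [hw, hw1] at this
    rw [Nat.even_iff] at this
    omega
end

section
/- Let H_1 and H_2 be finite connected bipartite undirected graphs, each with at least one edge. Then the tensor product H_1 × H_2 has exactly two connected components, and each component is bipartite. -/
/-- Colours agree along a walk iff the walk has even length. -/
lemma color_parity {V : Type} {G : SimpleGraph V} {c : V → Bool}
    (hc : ∀ u v, G.Adj u v → c u ≠ c v) {a b : V} (w : G.Walk a b) :
    (c a = c b) ↔ Even w.length := by
  induction w with
  | nil => simp
  | @cons u x y h p ih =>
      have hux := hc u x h
      rw [SimpleGraph.Walk.length_cons, Nat.even_add_one, ← ih]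
      revert hux
      cases c u <;> cases c x <;> cases c y <;> simp

/-- Every vertex of a connected graph with an edge has a neighbor. -/
lemma exists_neighbor_s9 {V : Type} {G : SimpleGraph V} (hc : G.Connected)
    (he : ∃ a b, G.Adj a b) (v : V) : ∃ w, G.Adj v w := by
  obtain ⟨a, b, hab⟩ := he
  obtain ⟨w⟩ := hc v a
  cases w with
  | nil => exact ⟨b, hab⟩
  | cons h _ => exact ⟨_, h⟩

/-- Walks can be padded by any even amount. -/
lemma pad_walk {V : Type} {G : SimpleGraph V} {a b n : V} (hn : G.Adj b n)
    {w : G.Walk a b} : ∀ k : ℕ, ∃ w' : G.Walk a b, w'.length = w.length + 2 * k := by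
  intro k
  induction k with
  | zero => exact ⟨w, by simp⟩
  | succ k ih =>
      obtain ⟨w', hw'⟩ := ih
      refine ⟨w'.append (.cons hn (.cons hn.symm .nil)), ?_⟩
      simp [SimpleGraph.Walk.length_append, hw']
      ring

/-- Equal-length walks in the factors induce reachability in the tensor product. -/
lemma tensor_reach {V1 V2 : Type} {H1 : SimpleGraph V1} {H2 : SimpleGraph V2} :
    ∀ (n : ℕ) {a b : V1} {x y : V2} (w1 : H1.Walk a b) (w2 : H2.Walk x y),
      w1.length = n → w2.length = n → (tensorProd H1 H2).Reachable (a, x) (b, y) := by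
  intro n
  induction n with
  | zero =>
      intro a b x y w1 w2 h1 h2
      cases w1 with
      | nil =>
          cases w2 with
          | nil => exact SimpleGraph.Reachable.refl _
          | cons _ _ => simp at h2
      | cons _ _ => simp at h1
  | succ n ih =>
      intro a b x y w1 w2 h1 h2
      cases w1 with
      | nil => simp at h1
      | cons ha p1 =>
          cases w2 with
          | nil => simp at h2
          | cons hx p2 =>
              have step : (tensorProd H1 H2).Adj (a, x) (_, _) := ⟨ha, hx⟩
              exact (step.reachable).trans
                (ih p1 p2 (by simpa using h1) (by simpa using h2))

/-- The tensor product of two finite connected bipartite graphs, each with at least one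
edge, has exactly two connected components, and it is bipartite (hence every component
is bipartite). -/
theorem stmt_9 {V1 V2 : Type} [Fintype V1] [Fintype V2]
    (H1 : SimpleGraph V1) (H2 : SimpleGraph V2)
    (h1c : H1.Connected) (h2c : H2.Connected)
    (h1b : IsBip H1) (h2b : IsBip H2)
    (h1e : ∃ a b, H1.Adj a b) (h2e : ∃ a b, H2.Adj a b) :
    Nat.card (tensorProd H1 H2).ConnectedComponent = 2 ∧
      IsBip (tensorProd H1 H2) := by
  obtain ⟨c1, hc1⟩ := h1b
  obtain ⟨c2, hc2⟩ := h2b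
  -- the invariant
  set inv : V1 × V2 → Bool := fun p => xor (c1 p.1) (c2 p.2) with hinv
  have hinv_adj : ∀ u v, (tensorProd H1 H2).Adj u v → inv u = inv v := by
    rintro ⟨u1, u2⟩ ⟨v1, v2⟩ ⟨ha1, ha2⟩
    have h1 := hc1 _ _ ha1
    have h2 := hc2 _ _ ha2
    simp only [hinv]
    revert h1 h2
    cases c1 u1 <;> cases c1 v1 <;> cases c2 u2 <;> cases c2 v2 <;> simp
  -- key: same invariant implies reachable
  have key : ∀ u v : V1 × V2, inv u = inv v → (tensorProd H1 H2).Reachable u v := by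
    rintro ⟨u1, u2⟩ ⟨v1, v2⟩ h
    obtain ⟨w1⟩ := h1c u1 v1
    obtain ⟨w2⟩ := h2c u2 v2
    have p1 : (c1 u1 = c1 v1) ↔ Even w1.length := color_parity hc1 w1
    have p2 : (c2 u2 = c2 v2) ↔ Even w2.length := color_parity hc2 w2
    have hpar : Even w1.length ↔ Even w2.length := by
      rw [← p1, ← p2]
      simp only [hinv] at h
      revert h
      cases c1 u1 <;> cases c1 v1 <;> cases c2 u2 <;> cases c2 v2 <;> simp
    obtain ⟨n1, hn1⟩ := exists_neighbor_s9 h1c h1e v1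
    obtain ⟨n2, hn2⟩ := exists_neighbor_s9 h2c h2e v2
    rcases le_total w1.length w2.length with hle | hle
    · have hpar' : w1.length % 2 = w2.length % 2 := by
        simp only [Nat.even_iff] at hpar
        omega
      obtain ⟨w1', hw1'⟩ := pad_walk hn1 (w := w1) ((w2.length - w1.length) / 2)
      exact tensor_reach w2.length w1' w2 (by omega) rfl
    · have hpar' : w1.length % 2 = w2.length % 2 := by
        simp only [Nat.even_iff] at hpar
        omega
      obtain ⟨w2', hw2'⟩ := pad_walk hn2 (w := w2) ((w1.length - w2.length) / 2)
      exact tensor_reach w1.length w1 w2' rfl (by omega)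
  -- the induced map on components
  set g : (tensorProd H1 H2).ConnectedComponent → Bool :=
    SimpleGraph.ConnectedComponent.lift inv (fun u v p hp => by
      clear hp
      induction p with
      | nil => rfl
      | cons h _ ih => exact (hinv_adj _ _ h).trans ih) with hg
  have hg_bij : Function.Bijective g := by
    constructor
    · refine SimpleGraph.ConnectedComponent.ind₂ (fun u v h => ?_)
      exact SimpleGraph.ConnectedComponent.sound (key u v h)
    · intro b
      obtain ⟨a1, b1, hab⟩ := h1e
      obtain ⟨a2, b2, hab2⟩ := h2e
      have h1 := hc1 _ _ hab
      rcases Bool.eq_or_eq_not b (inv (a1, a2)) with h | h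
      · exact ⟨(tensorProd H1 H2).connectedComponentMk (a1, a2), h.symm⟩
      · refine ⟨(tensorProd H1 H2).connectedComponentMk (b1, a2), ?_⟩
        show inv (b1, a2) = b
        rw [h]
        simp only [hinv]
        revert h1
        cases c1 a1 <;> cases c1 b1 <;> cases c2 a2 <;> simp
  refine ⟨?_, c1 ∘ Prod.fst, fun u v h => hc1 _ _ h.1⟩
  rw [Nat.card_eq_of_bijective g hg_bij]
  simp
end

section
/- Let H be a finite connected undirected graph and fix d ≥ 1, n ≥ 0. For k ≥ 1 let H^{k}_{n,walk} be the graph whose vertices are the graph homomorphisms from the box [-n,n]^{k-1} to H, two of them being adjacent when they are coordinatewise adjacent in H, so that H^{1}_{n,walk} is H itself and diam(H^{1}_{n,walk}) = diam(H). Then diam(H^{d+1}_{n,walk}) ≤ 2n + diam(H^{d}_{n,walk}); consequently diam(H^{d}_{n,walk}) ≤ diam(H) + 2n(d-1) for all d ≥ 1. -/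
/-- Nearest-neighbour adjacency on the box `[-n, n]^e` (coordinates encoded by
`Fin (2n+1)`). -/
def BoxAdj (n e : ℕ) (i j : Fin e → Fin (2 * n + 1)) : Prop :=
  ∃ k, ((i k).val + 1 = (j k).val ∨ (j k).val + 1 = (i k).val) ∧ ∀ l, l ≠ k → i l = j l

/-- `x` is a graph homomorphism from the box `[-n, n]^e` to the graph with adjacency
relation `A`. -/
def IsBoxHom {V : Type} (A : V → V → Prop) (n e : ℕ)
    (x : (Fin e → Fin (2 * n + 1)) → V) : Prop :=
  ∀ i j, BoxAdj n e i j → A (x i) (x j)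

/-- A walk of length `m` from `x` to `y` in the graph `H^{e+1}_{n,walk}` of homomorphisms
from the box `[-n, n]^e` to `H`, with coordinatewise adjacency. -/
def BoxChain {V : Type} (A : V → V → Prop) (n e m : ℕ)
    (x y : (Fin e → Fin (2 * n + 1)) → V) : Prop :=
  ∃ c : ℕ → (Fin e → Fin (2 * n + 1)) → V,
    c 0 = x ∧ c m = y ∧ (∀ t ≤ m, IsBoxHom A n e (c t)) ∧
    ∀ t < m, ∀ i, A (c t i) (c (t + 1) i)



lemma boxAdj_snoc {n e : ℕ} {i j : Fin e → Fin (2*n+1)} (h : BoxAdj n e i j)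
    (v : Fin (2*n+1)) : BoxAdj n (e+1) (Fin.snoc i v) (Fin.snoc j v) := by
  obtain ⟨k, hk, hl⟩ := h
  refine ⟨k.castSucc, by simpa using hk, ?_⟩
  intro l hl'
  induction l using Fin.lastCases with
  | last => simp
  | cast l' =>
    simp only [Fin.snoc_castSucc]
    exact hl l' fun h => hl' (by rw [h])

lemma boxAdj_snoc_last {n e : ℕ} (i : Fin e → Fin (2*n+1)) {v w : Fin (2*n+1)}
    (h : v.val + 1 = w.val ∨ w.val + 1 = v.val) :
    BoxAdj n (e+1) (Fin.snoc i v) (Fin.snoc i w) := by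
  refine ⟨Fin.last e, by simpa using h, ?_⟩
  intro l hl'
  induction l using Fin.lastCases with
  | last => exact absurd rfl hl'
  | cast l' => simp

def Zaux {V : Type} (n e m : ℕ) (x y : (Fin (e+1) → Fin (2*n+1)) → V)
    (c : ℕ → (Fin e → Fin (2*n+1)) → V) (i : Fin e → Fin (2*n+1)) (u : ℕ) : V :=
  if h1 : 2*n + m < u ∧ u ≤ 2*n + (2*n + m) then
    x (Fin.snoc i ⟨u - (2*n+m), by omega⟩)
  else if h2 : 2*n ≤ u then c (2*n + m - u) i
  else y (Fin.snoc i ⟨u, by omega⟩)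

lemma Zaux_x {V : Type} {n e m : ℕ} {x y : (Fin (e+1) → Fin (2*n+1)) → V}
    {c : ℕ → (Fin e → Fin (2*n+1)) → V} {i : Fin e → Fin (2*n+1)} {u : ℕ}
    (h1 : 2*n + m < u) (h2 : u ≤ 2*n + (2*n + m)) :
    Zaux n e m x y c i u = x (Fin.snoc i ⟨u - (2*n+m), by omega⟩) := by
  unfold Zaux; rw [dif_pos ⟨h1, h2⟩]

lemma Zaux_c {V : Type} {n e m : ℕ} {x y : (Fin (e+1) → Fin (2*n+1)) → V}
    {c : ℕ → (Fin e → Fin (2*n+1)) → V} {i : Fin e → Fin (2*n+1)} {u : ℕ}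
    (h1 : 2*n ≤ u) (h2 : u ≤ 2*n + m) :
    Zaux n e m x y c i u = c (2*n + m - u) i := by
  unfold Zaux; rw [dif_neg (by omega), dif_pos h1]

lemma Zaux_y {V : Type} {n e m : ℕ} {x y : (Fin (e+1) → Fin (2*n+1)) → V}
    {c : ℕ → (Fin e → Fin (2*n+1)) → V} {i : Fin e → Fin (2*n+1)} {u : ℕ}
    (h : u < 2*n) :
    Zaux n e m x y c i u = y (Fin.snoc i ⟨u, by omega⟩) := by
  unfold Zaux; rw [dif_neg (by omega), dif_neg (by omega)]

lemma boxAdj_snoc_mk {n e : ℕ} (i : Fin e → Fin (2*n+1)) {a b : ℕ}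
    (ha : a < 2*n+1) (hb : b < 2*n+1) (h : a + 1 = b ∨ b + 1 = a) :
    BoxAdj n (e+1) (Fin.snoc i ⟨a, ha⟩) (Fin.snoc i ⟨b, hb⟩) :=
  boxAdj_snoc_last i h

lemma step_lemma {V : Type} (A : V → V → Prop) (hsym : Symmetric A) {n e DE : ℕ}
    (IH : ∀ x y, IsBoxHom A n e x → IsBoxHom A n e y → ∃ m ≤ DE, BoxChain A n e m x y)
    (x y : (Fin (e+1) → Fin (2*n+1)) → V)
    (hx : IsBoxHom A n (e+1) x) (hy : IsBoxHom A n (e+1) y) :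
    ∃ m ≤ 2*n + DE, BoxChain A n (e+1) m x y := by
  obtain ⟨m, hm, c, hc0, hcm, hchom, hcstep⟩ :=
    IH (fun i => x (Fin.snoc i ⟨0, by omega⟩)) (fun i => y (Fin.snoc i ⟨2*n, by omega⟩))
      (fun i j h => hx _ _ (boxAdj_snoc h _))
      (fun i j h => hy _ _ (boxAdj_snoc h _))
  have hc0' : ∀ i, c 0 i = x (Fin.snoc i ⟨0, by omega⟩) := fun i => congrFun hc0 i
  have hcm' : ∀ i, c m i = y (Fin.snoc i ⟨2*n, by omega⟩) := fun i => congrFun hcm i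
  -- vertical adjacency in the glued column
  have hZ1 : ∀ i u, u + 1 ≤ 2*n + (2*n + m) →
      A (Zaux n e m x y c i (u+1)) (Zaux n e m x y c i u) := by
    intro i u hu
    by_cases hA : 2*n + m < u
    · rw [Zaux_x (by omega) (by omega), Zaux_x hA (by omega)]
      exact hx _ _ (boxAdj_snoc_mk i (by omega) (by omega) (Or.inr (by omega)))
    · by_cases hB : 2*n + m = u
      · rw [Zaux_x (by omega) (by omega), Zaux_c (by omega) (by omega),
          show 2*n + m - u = 0 by omega, hc0' i]
        exact hx _ _ (boxAdj_snoc_mk i (by omega) (by omega) (Or.inr (by omega)))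
      · by_cases hC : 2*n ≤ u
        · rw [Zaux_c (by omega) (by omega), Zaux_c (by omega) (by omega),
            show 2*n + m - u = (2*n + m - (u+1)) + 1 by omega]
          exact hcstep _ (by omega) i
        · by_cases hD : 2*n = u + 1
          · rw [Zaux_c (by omega) (by omega), Zaux_y (by omega),
              show 2*n + m - (u+1) = m by omega, hcm' i]
            exact hy _ _ (boxAdj_snoc_mk i (by omega) (by omega) (Or.inr (by omega)))
          · rw [Zaux_y (by omega), Zaux_y (by omega)]
            exact hy _ _ (boxAdj_snoc_mk i (by omega) (by omega) (Or.inr (by omega)))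
  -- horizontal adjacency in the glued column
  have hZ2 : ∀ i j u, u ≤ 2*n + (2*n + m) → BoxAdj n e i j →
      A (Zaux n e m x y c i u) (Zaux n e m x y c j u) := by
    intro i j u hu h
    by_cases h1 : 2*n + m < u
    · rw [Zaux_x h1 hu, Zaux_x h1 hu]
      exact hx _ _ (boxAdj_snoc h _)
    · by_cases h2 : 2*n ≤ u
      · rw [Zaux_c h2 (by omega), Zaux_c h2 (by omega)]
        exact hchom _ (by omega) _ _ h
      · rw [Zaux_y (by omega), Zaux_y (by omega)]
        exact hy _ _ (boxAdj_snoc h _)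
  refine ⟨2*n + m, by omega,
    fun t i => Zaux n e m x y c (Fin.init i) (2*n + m + (i (Fin.last e)).val - t),
    ?_, ?_, ?_, ?_⟩
  · funext i
    beta_reduce
    have hs : (i (Fin.last e)).val < 2*n + 1 := (i (Fin.last e)).isLt
    simp only [Nat.sub_zero]
    by_cases hs0 : (i (Fin.last e)).val = 0
    · rw [Zaux_c (by omega) (by omega),
        show 2*n+m - (2*n+m+(i (Fin.last e)).val) = 0 by omega, hc0' _]
      have hb : (⟨0, by omega⟩ : Fin (2*n+1)) = i (Fin.last e) := by
        simp [Fin.ext_iff]; omega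
      rw [hb, Fin.snoc_init_self]
    · rw [Zaux_x (by omega) (by omega)]
      have hb : (⟨2*n+m+(i (Fin.last e)).val - (2*n+m), by omega⟩ : Fin (2*n+1))
          = i (Fin.last e) := by simp [Fin.ext_iff]
      rw [hb, Fin.snoc_init_self]
  · funext i
    beta_reduce
    have hs : (i (Fin.last e)).val < 2*n + 1 := (i (Fin.last e)).isLt
    rw [show 2*n + m + (i (Fin.last e)).val - (2*n+m) = (i (Fin.last e)).val by omega]
    by_cases hs0 : (i (Fin.last e)).val = 2*n
    · rw [Zaux_c (by omega) (by omega),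
        show 2*n+m - (i (Fin.last e)).val = m by omega, hcm' _]
      have hb : (⟨2*n, by omega⟩ : Fin (2*n+1)) = i (Fin.last e) := by
        simp [Fin.ext_iff]; omega
      rw [hb, Fin.snoc_init_self]
    · rw [Zaux_y (by omega)]
      have hb : (⟨(i (Fin.last e)).val, by omega⟩ : Fin (2*n+1)) = i (Fin.last e) := by
        simp
      rw [hb, Fin.snoc_init_self]
  · intro t ht i j ⟨k, hk, hl⟩
    beta_reduce
    by_cases hke : k = Fin.last e
    · subst hke
      have hinit : Fin.init i = Fin.init j := by
        funext l'
        exact hl l'.castSucc (Fin.castSucc_lt_last l').ne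
      have hsi : (i (Fin.last e)).val < 2*n+1 := (i (Fin.last e)).isLt
      have hsj : (j (Fin.last e)).val < 2*n+1 := (j (Fin.last e)).isLt
      rcases hk with hk | hk
      · rw [hinit, show 2*n + m + (j (Fin.last e)).val - t
            = (2*n + m + (i (Fin.last e)).val - t) + 1 by omega]
        exact hsym (hZ1 _ _ (by omega))
      · rw [hinit, show 2*n + m + (i (Fin.last e)).val - t
            = (2*n + m + (j (Fin.last e)).val - t) + 1 by omega]
        exact hZ1 _ _ (by omega)
    · obtain ⟨k', rfl⟩ := Fin.exists_castSucc_eq.mpr hke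
      have hlast : i (Fin.last e) = j (Fin.last e) :=
        hl (Fin.last e) fun h => hke h.symm
      have hadj : BoxAdj n e (Fin.init i) (Fin.init j) :=
        ⟨k', hk, fun l' hl' =>
          hl l'.castSucc fun h => hl' (Fin.castSucc_injective _ h)⟩
      rw [hlast]
      exact hZ2 _ _ _ (by have := (j (Fin.last e)).isLt; omega) hadj
  · intro t ht i
    beta_reduce
    rw [show 2*n + m + (i (Fin.last e)).val - t
        = (2*n + m + (i (Fin.last e)).val - (t+1)) + 1 by omega]
    exact hZ1 _ _ (by have := (i (Fin.last e)).isLt; omega)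


/-- For a finite connected graph `H`: the diameter of the box-homomorphism walk graph in
box dimension `e + 1` is at most `2n` plus the diameter in box dimension `e`;
consequently the diameter in box dimension `e` is at most `diam(H) + 2n·e`. -/
theorem stmt_18 {V : Type} [Fintype V] (A : V → V → Prop) (hsym : Symmetric A)
    (hconn : ∀ u v : V, Relation.ReflTransGen A u v)
    (n DH : ℕ)
    (hDH : ∀ u v : V, ∃ m ≤ DH, ∃ c : ℕ → V,
      c 0 = u ∧ c m = v ∧ ∀ t < m, A (c t) (c (t + 1))) :
    (∀ e DE : ℕ,
      (∀ x y, IsBoxHom A n e x → IsBoxHom A n e y →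
        ∃ m ≤ DE, BoxChain A n e m x y) →
      ∀ x y, IsBoxHom A n (e + 1) x → IsBoxHom A n (e + 1) y →
        ∃ m ≤ 2 * n + DE, BoxChain A n (e + 1) m x y) ∧
    (∀ e : ℕ, ∀ x y, IsBoxHom A n e x → IsBoxHom A n e y →
      ∃ m ≤ DH + 2 * n * e, BoxChain A n e m x y) := by
  constructor
  · intro e DE hIH x y hx hy
    exact step_lemma A hsym hIH x y hx hy
  · intro e
    induction e with
    | zero =>
      intro x y _ _
      obtain ⟨m, hm, c, hc0, hcm, hstep⟩ := hDH (x fun k => k.elim0) (y fun k => k.elim0)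
      refine ⟨m, by omega, fun t _ => c t, ?_, ?_, ?_, ?_⟩
      · funext q
        have hq : q = fun k => k.elim0 := funext fun k => k.elim0
        beta_reduce
        rw [hq]; exact hc0
      · funext q
        have hq : q = fun k => k.elim0 := funext fun k => k.elim0
        beta_reduce
        rw [hq]; exact hcm
      · intro t _ i j ⟨k, _⟩
        exact k.elim0
      · intro t ht i
        exact hstep t ht
    | succ e ih =>
      intro x y hx hy
      obtain ⟨m, hm, hch⟩ := step_lemma A hsym ih x y hx hy
      refine ⟨m, ?_, hch⟩
      have : 2 * n * (e + 1) = 2 * n * e + 2 * n := by ring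
      omega
end

section
/- Let H be the graph on vertices {0,1,2,3,4,5} with i ~ j iff |i - j| ≡ 1 (mod 6) (the 6-cycle C_6). Then for any i, the vertex (i+1) mod 6 is the unique common neighbor of i mod 6 and (i+2) mod 6. Consequently, if x: Z^2 → C_6 is the homomorphism x_{(j,k)} = (j+k) mod 6 and y: Z^2 → C_6 is any homomorphism agreeing with x on the L-shaped set L = {(i,0) : 0 ≤ i ≤ n} ∪ {(n,i) : 0 ≤ i ≤ n}, then y agrees with x on the whole square [0,n] × [0,n]. -/
/-- Adjacency in the `6`-cycle `C₆` on `ZMod 6`. -/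
def C6Adj (a b : ZMod 6) : Prop := a - b = 1 ∨ b - a = 1

instance : ∀ a b : ZMod 6, Decidable (C6Adj a b) := fun a b => by
  unfold C6Adj; infer_instance

lemma C6_uniq : ∀ a b : ZMod 6, C6Adj a b → C6Adj (a + 2) b → b = a + 1 := by decide

/-- In `C₆`, `i + 1` is the unique common neighbour of `i` and `i + 2`. Consequently, any
homomorphism `y : ℤ² → C₆` agreeing with `x_{(j,k)} = (j + k) mod 6` on the L-shaped set
`{(i,0) : 0 ≤ i ≤ n} ∪ {(n,i) : 0 ≤ i ≤ n}` agrees with `x` on the square `[0,n]²`. -/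
theorem stmt_19 (n : ℕ) :
    (∀ i : ZMod 6, (C6Adj i (i + 1) ∧ C6Adj (i + 2) (i + 1)) ∧
      ∀ b : ZMod 6, C6Adj i b → C6Adj (i + 2) b → b = i + 1) ∧
    (∀ y : ℤ × ℤ → ZMod 6,
      (∀ p q : ℤ × ℤ, (p.1 - q.1).natAbs + (p.2 - q.2).natAbs = 1 → C6Adj (y p) (y q)) →
      (∀ i : ℤ, 0 ≤ i → i ≤ (n : ℤ) →
        y (i, 0) = (i : ZMod 6) ∧ y ((n : ℤ), i) = (((n : ℤ) + i : ℤ) : ZMod 6)) →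
      ∀ j k : ℤ, 0 ≤ j → j ≤ (n : ℤ) → 0 ≤ k → k ≤ (n : ℤ) →
        y (j, k) = ((j + k : ℤ) : ZMod 6)) := by
  constructor
  · decide
  · intro y hy hL j k hj0 hjn hk0 hkn
    -- main claim by induction on k (as a natural number)
    have key : ∀ K : ℕ, (K : ℤ) ≤ (n : ℤ) → ∀ J : ℕ, (J : ℤ) ≤ (n : ℤ) →
        y ((J : ℤ), (K : ℤ)) = (((J : ℤ) + (K : ℤ) : ℤ) : ZMod 6) := by
      intro K
      induction K with
      | zero =>
        intro _ J hJ
        have := (hL J (by positivity) hJ).1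
        push_cast
        simpa using this
      | succ K ih =>
        intro hK1
        have hK : (K : ℤ) ≤ (n : ℤ) := by push_cast at hK1 ⊢; omega
        -- inner induction: J = n - d, descending from the right column
        have inner : ∀ d : ℕ, ∀ J : ℕ, (J : ℤ) + (d : ℤ) = (n : ℤ) →
            y ((J : ℤ), ((K : ℕ) + 1 : ℕ)) = (((J : ℤ) + ((K : ℕ) + 1 : ℕ) : ℤ) : ZMod 6) := by
          intro d
          induction d with
          | zero =>
            intro J hJ
            have hJn : (J : ℤ) = (n : ℤ) := by omega
            have := (hL ((K : ℕ) + 1 : ℕ) (by positivity) (by push_cast at hK1 ⊢; omega)).2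
            rw [hJn]
            rw [this]
          | succ d ihd =>
            intro J hJ
            have h1 : ((J + 1 : ℕ) : ℤ) + (d : ℤ) = (n : ℤ) := by push_cast; omega
            have hright := ihd (J + 1) h1
            have hbelow := ih hK J (by omega)
            -- adjacency vertical
            have hv := hy ((J : ℤ), (K : ℤ)) ((J : ℤ), ((K : ℕ) + 1 : ℕ)) (by simp)
            have hh := hy (((J + 1 : ℕ) : ℤ), ((K : ℕ) + 1 : ℕ)) ((J : ℤ), ((K : ℕ) + 1 : ℕ)) (by simp)
            rw [hbelow] at hv
            rw [hright] at hh
            have hcast : ((((J + 1 : ℕ) : ℤ) + ((K : ℕ) + 1 : ℕ) : ℤ) : ZMod 6)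
                = (((J : ℤ) + (K : ℤ) : ℤ) : ZMod 6) + 2 := by push_cast; ring
            rw [hcast] at hh
            have := C6_uniq _ _ hv hh
            rw [this]
            push_cast
            ring
        intro J hJ
        have : (J : ℤ) + ((n - J : ℕ) : ℤ) = (n : ℤ) := by push_cast at hJ ⊢; omega
        have := inner (n - J) J this
        push_cast at this ⊢
        convert this using 2
    -- finish: j = J, k = K for naturals
    obtain ⟨J, rfl⟩ := Int.eq_ofNat_of_zero_le hj0
    obtain ⟨K, rfl⟩ := Int.eq_ofNat_of_zero_le hk0
    exact key K hkn J hjn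
end
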